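/- Let S be a nonempty h-admissible set and m := m(S) its maximum descent. For all n ≥ h(m): (1) the set B_k(S,n) := {π ∈ I_h(S,n) : π_{h(m)} = k} is nonempty only if h(m) − m ≤ k ≤ h(m); and (2) for each k in this range, #B_k(S,n) = #B_k(S, h(m)) · C(n − k, n − h(m)). -/
import Mathlib


open Finset

/-- The 1-based `k`-th entry (as a value in `{1,…,n}`) of a permutation of `Fin n`. -/
def entry {n : ℕ} (π : Equiv.Perm (Fin n)) (k : ℕ) : ℕ :=
  if hk : k - 1 < n then ((π ⟨k - 1, hk⟩ : Fin n) : ℕ) + 1 else 0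

/-- The set of possible h-inversions `P_h = {(i,j) : 0 < i, i < j ≤ h i}`. -/
def Ph (h : ℕ → ℕ) : Set (ℕ × ℕ) := {p | 0 < p.1 ∧ p.1 < p.2 ∧ p.2 ≤ h p.1}

/-- The set of h-inversions of a permutation `π ∈ S_n`, as 1-based pairs:
`inv_h(π) = {(i,j) : i < j ≤ min(h i, n), π_i > π_j}`. -/
def invh (h : ℕ → ℕ) {n : ℕ} (π : Equiv.Perm (Fin n)) : Finset (ℕ × ℕ) :=
  ((Finset.univ : Finset (Fin n × Fin n)).filter
      (fun p => (p.1 : ℕ) < (p.2 : ℕ) ∧ (p.2 : ℕ) + 1 ≤ h ((p.1 : ℕ) + 1) ∧ π p.2 < π p.1)).image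
    (fun p => ((p.1 : ℕ) + 1, (p.2 : ℕ) + 1))

/-- `I_h(S,n)`, the set of permutations of `S_n` with h-inversion set `S`. -/
def Ih (h : ℕ → ℕ) (S : Finset (ℕ × ℕ)) (n : ℕ) : Finset (Equiv.Perm (Fin n)) :=
  Finset.univ.filter (fun π => invh h π = S)

/-- `𝓘_h(S;n) = #I_h(S,n)`. -/
def Icount (h : ℕ → ℕ) (S : Finset (ℕ × ℕ)) (n : ℕ) : ℕ := (Ih h S n).card

/-- `S` is h-admissible when it is the h-inversion set of some permutation. -/
def Admissible (h : ℕ → ℕ) (S : Finset (ℕ × ℕ)) : Prop := ∃ n, (Ih h S n).Nonempty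

/-- `j(S)`, the largest index appearing in a pair of `S`. -/
def jS (S : Finset (ℕ × ℕ)) : ℕ := S.sup Prod.snd

/-- `m(S)`, the maximum descent of `S`. -/
def mS (S : Finset (ℕ × ℕ)) : ℕ := (S.filter fun p => p.2 = p.1 + 1).sup Prod.fst

/-- `t(σ) = max{σ_k : 1 ≤ k ≤ j(S), h(k) ≥ j(S)+1}`. -/
def tOf (h : ℕ → ℕ) (S : Finset (ℕ × ℕ)) (σ : Equiv.Perm (Fin (jS S))) : ℕ :=
  ((Finset.Icc 1 (jS S)).filter fun k => jS S + 1 ≤ h k).sup (entry σ)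

/-- `B_k(S,n)`, the permutations in `I_h(S,n)` with entry `k` in position `h(m(S))`. -/
def Bset (h : ℕ → ℕ) (S : Finset (ℕ × ℕ)) (k n : ℕ) : Finset (Equiv.Perm (Fin n)) :=
  (Ih h S n).filter fun π => entry π (h (mS S)) = k

/-- The coefficient `b_k(S) = #B_k(S, h(m(S)))`. -/
def bCoeff (h : ℕ → ℕ) (S : Finset (ℕ × ℕ)) (k : ℕ) : ℕ := (Bset h S k (h (mS S))).card

/-- The coefficient `a_k(S)`. -/
def aCoeff (h : ℕ → ℕ) (S : Finset (ℕ × ℕ)) (k : ℕ) : ℕ :=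
  ((Ih h S (mS S + h (mS S) - 1)).filter fun π =>
    ((Finset.Icc 1 (mS S)).image (entry π)) ∩ Finset.Icc (h (mS S)) (mS S + h (mS S) - 1)
      = Finset.Icc (h (mS S)) (h (mS S) + k - 1)).card

/-- The length (number of inversions) of a permutation. -/
def lenPerm {n : ℕ} (π : Equiv.Perm (Fin n)) : ℕ :=
  ((Finset.univ : Finset (Fin n × Fin n)).filter fun p => p.1 < p.2 ∧ π p.2 < π p.1).card

/-- `ℓ_{[a,b]}(A) = #{(x,y) ∈ [a,b]² : x > y, x ∈ A, y ∉ A}`. -/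
def lenSet (a b : ℕ) (A : Finset ℕ) : ℕ :=
  ((Finset.Icc a b ×ˢ Finset.Icc a b).filter fun q => q.2 < q.1 ∧ q.1 ∈ A ∧ q.2 ∉ A).card


lemma mem_invh (h : ℕ → ℕ) {n : ℕ} (π : Equiv.Perm (Fin n)) (a b : ℕ) :
    (a, b) ∈ invh h π ↔ ∃ p q : Fin n, (p : ℕ) + 1 = a ∧ (q : ℕ) + 1 = b ∧
      (p : ℕ) < (q : ℕ) ∧ (q : ℕ) + 1 ≤ h ((p : ℕ) + 1) ∧ π q < π p := by
  simp only [invh, Finset.mem_image, Finset.mem_filter, Finset.mem_univ, true_and, Prod.exists,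
    Prod.mk.injEq]
  constructor
  · rintro ⟨p, q, ⟨h1, h2, h3⟩, h4, h5⟩
    exact ⟨p, q, h4, h5, h1, h2, h3⟩
  · rintro ⟨p, q, h4, h5, h1, h2, h3⟩
    exact ⟨p, q, ⟨h1, h2, h3⟩, h4, h5⟩

lemma chainGap {n : ℕ} (f : Fin n → Fin n) (a : ℕ)
    (hadj : ∀ i : ℕ, ∀ h2 : i + 1 < n, a ≤ i → f ⟨i, by omega⟩ < f ⟨i + 1, h2⟩) :
    ∀ d p : ℕ, a ≤ p → ∀ h2 : p + d < n, (f ⟨p, by omega⟩ : ℕ) + d ≤ f ⟨p + d, h2⟩ := by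
  intro d
  induction d with
  | zero => intro p _ h2; simp
  | succ d ih =>
    intro p hp h2
    have h3 : p + d < n := by omega
    have := ih p hp h3
    have hlt : f ⟨p + d, h3⟩ < f ⟨p + d + 1, by omega⟩ := hadj (p + d) (by omega) (by omega)
    have : (f ⟨p + d, h3⟩ : ℕ) < f ⟨p + (d+1), by omega⟩ := by
      simpa [Nat.add_assoc] using (Fin.lt_iff_val_lt_val.mp hlt)
    omega

lemma finStrictMono_le {a b : ℕ} (f : Fin a → Fin b) (hf : StrictMono f) (j : Fin a) :
    (j : ℕ) ≤ (f j : ℕ) := by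
  rcases j with ⟨v, hv⟩
  induction v with
  | zero => exact Nat.zero_le _
  | succ v ih =>
    have h1 : (⟨v, Nat.lt_of_succ_lt hv⟩ : Fin a) < ⟨v + 1, hv⟩ := by
      simp [Fin.lt_def]
    have h2 := hf h1
    have h3 := ih (Nat.lt_of_succ_lt hv)
    rw [Fin.lt_def] at h2
    simp only [Fin.val_mk] at h2 h3 ⊢
    omega

lemma image_val_attachFin {n : ℕ} (s : Finset ℕ) (hs : ∀ m ∈ s, m < n) :
    (s.attachFin hs).image (fun x : Fin n => (x : ℕ)) = s := by
  ext x
  simp only [Finset.mem_image, Finset.mem_attachFin]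
  constructor
  · rintro ⟨y, hy, rfl⟩; exact hy
  · intro hx; exact ⟨⟨x, hs x hx⟩, hx, rfl⟩

lemma attachFin_image_val {n : ℕ} (s : Finset (Fin n)) (hs : ∀ m ∈ s.image (fun x : Fin n => (x:ℕ)), m < n) :
    Finset.attachFin (s.image (fun x : Fin n => (x : ℕ))) hs = s := by
  ext x
  simp [Finset.mem_attachFin, Fin.val_inj]

lemma orderEmbOfFin_small {n H k : ℕ} (C : Finset (Fin n)) (hC : C.card = H)
    (hsmall : ∀ x : Fin n, (x : ℕ) < k → x ∈ C) (i : Fin H) (hik : (i : ℕ) < k) :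
    ((C.orderEmbOfFin hC i : Fin n) : ℕ) = (i : ℕ) := by
  have hle : (i : ℕ) ≤ ((C.orderEmbOfFin hC i : Fin n) : ℕ) :=
    finStrictMono_le _ (C.orderEmbOfFin hC).strictMono i
  have hik' : (i : ℕ) < n := by
    have := (C.orderEmbOfFin hC i).2; omega
  have hmem : (⟨(i : ℕ), hik'⟩ : Fin n) ∈ C := hsmall _ hik
  set iso := C.orderIsoOfFin hC with hiso
  have hmemj : ∀ j : Fin ((i : ℕ) + 1), (⟨(j : ℕ), by omega⟩ : Fin n) ∈ C := by
    intro j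
    apply hsmall
    simp only [Fin.val_mk]
    omega
  set u : Fin ((i : ℕ) + 1) → Fin H := fun j => iso.symm ⟨⟨(j : ℕ), by omega⟩, hmemj j⟩ with hu
  have humono : StrictMono u := by
    intro j1 j2 hj
    apply iso.symm.strictMono
    simp only [Subtype.mk_lt_mk, Fin.lt_iff_val_lt_val]
    exact hj
  have hule := finStrictMono_le u humono ⟨(i : ℕ), by omega⟩
  have hile : (i : ℕ) ≤ (u ⟨(i : ℕ), by omega⟩ : ℕ) := by simpa using hule
  have hIle : i ≤ u ⟨(i : ℕ), by omega⟩ := by rw [Fin.le_def]; exact hile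
  have hx : (iso (u ⟨(i : ℕ), by omega⟩) : Fin n) = ⟨(i : ℕ), hik'⟩ := by
    simp [hu]
  have hmono2 : (iso i : Fin n) ≤ (iso (u ⟨(i : ℕ), by omega⟩) : Fin n) :=
    Subtype.coe_le_coe.mpr (iso.monotone hIle)
  have hfin : ((C.orderEmbOfFin hC i : Fin n) : ℕ) ≤ (i : ℕ) := by
    rw [hx] at hmono2
    have := Fin.le_def.mp hmono2
    simpa [Finset.coe_orderIsoOfFin_apply, hiso] using this
  omega

lemma step_after_m (h : ℕ → ℕ) (hgt : ∀ i : ℕ, 0 < i → i < h i) {n : ℕ} {S : Finset (ℕ × ℕ)}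
    {π : Equiv.Perm (Fin n)} (hπ : invh h π = S) {i : ℕ} (hi : mS S ≤ i) (h2 : i + 1 < n) :
    π ⟨i, by omega⟩ < π ⟨i + 1, h2⟩ := by
  by_contra hcon
  have hne : π ⟨i + 1, h2⟩ ≠ π ⟨i, by omega⟩ := by
    intro he
    have := π.injective he
    simp only [Fin.mk.injEq] at this
    omega
  have hlt : π ⟨i + 1, h2⟩ < π ⟨i, by omega⟩ := lt_of_le_of_ne (not_lt.mp hcon) hne
  have hmem : (i + 1, i + 2) ∈ invh h π := by
    rw [mem_invh]
    refine ⟨⟨i, by omega⟩, ⟨i + 1, h2⟩, by simp, by simp, by simp, ?_, hlt⟩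
    simp only [Fin.val_mk]
    have := hgt (i + 1) (by omega)
    omega
  rw [hπ] at hmem
  have hle : i + 1 ≤ mS S := by
    apply Finset.le_sup (f := Prod.fst) (b := (i + 1, i + 2))
    simp only [Finset.mem_filter]
    exact ⟨hmem, trivial⟩
  omega

lemma chainS (h : ℕ → ℕ) (hgt : ∀ i : ℕ, 0 < i → i < h i) {n : ℕ} {S : Finset (ℕ × ℕ)}
    {π : Equiv.Perm (Fin n)} (hπ : invh h π = S) (p q : Fin n) (hp : mS S ≤ (p : ℕ))
    (hpq : (p : ℕ) ≤ (q : ℕ)) : (π p : ℕ) + ((q : ℕ) - (p : ℕ)) ≤ (π q : ℕ) := by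
  have := chainGap (fun x => π x) (mS S)
    (fun i h2 hi => step_after_m h hgt hπ hi h2) ((q : ℕ) - (p : ℕ)) (p : ℕ) hp
    (by omega)
  have hq : (⟨(p : ℕ) + ((q : ℕ) - (p : ℕ)), by omega⟩ : Fin n) = q := by
    apply Fin.ext; simp; omega
  have hp' : (⟨(p : ℕ), by omega⟩ : Fin n) = p := by apply Fin.ext; simp
  rw [hq, hp'] at this
  exact this

lemma mS_pos (h : ℕ → ℕ) (hgt : ∀ i : ℕ, 0 < i → i < h i) (S : Finset (ℕ × ℕ))
    (hSne : S.Nonempty) (hadm : Admissible h S) : 1 ≤ mS S := by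
  by_contra hcon
  have hm0 : mS S = 0 := by omega
  obtain ⟨n₀, π₀, hπ₀⟩ := hadm
  rw [Ih, Finset.mem_filter] at hπ₀
  have hinv : invh h π₀ = S := hπ₀.2
  obtain ⟨⟨a, b⟩, hab⟩ := hSne
  rw [← hinv, mem_invh] at hab
  obtain ⟨p, q, h1, h2, h3, h4, h5⟩ := hab
  have := chainS h hgt hinv p q (by omega) (by omega)
  have := Fin.lt_def.mp h5
  omega

lemma pair_bound (h : ℕ → ℕ) (hmono : ∀ ⦃i j : ℕ⦄, 0 < i → i ≤ j → h i ≤ h j)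
    (hgt : ∀ i : ℕ, 0 < i → i < h i) (S : Finset (ℕ × ℕ)) (hadm : Admissible h S) :
    ∀ a b : ℕ, (a, b) ∈ S → 1 ≤ a ∧ a ≤ mS S ∧ a < b ∧ b ≤ h (mS S) := by
  intro a b hab
  obtain ⟨n₀, π₀, hπ₀⟩ := hadm
  rw [Ih, Finset.mem_filter] at hπ₀
  have hinv : invh h π₀ = S := hπ₀.2
  rw [← hinv, mem_invh] at hab
  obtain ⟨p, q, h1, h2, h3, h4, h5⟩ := hab
  subst h1; subst h2
  have ham : (p : ℕ) + 1 ≤ mS S := by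
    by_contra hcon
    have := chainS h hgt hinv p q (by omega) (by omega)
    have := Fin.lt_def.mp h5
    omega
  exact ⟨by omega, ham, by omega, le_trans h4 (hmono (by omega) ham)⟩

lemma invh_restrict (h : ℕ → ℕ) {n H : ℕ} (hHn : H ≤ n) (π : Equiv.Perm (Fin n))
    (σ : Equiv.Perm (Fin H))
    (hmatch : ∀ p q : Fin H, σ p < σ q ↔
      π ⟨(p : ℕ), lt_of_lt_of_le p.isLt hHn⟩ < π ⟨(q : ℕ), lt_of_lt_of_le q.isLt hHn⟩)
    (hno : ∀ a b : ℕ, (a, b) ∈ invh h π → b ≤ H) :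
    invh h σ = invh h π := by
  ext ⟨a, b⟩
  rw [mem_invh, mem_invh]
  constructor
  · rintro ⟨p, q, h1, h2, h3, h4, h5⟩
    refine ⟨⟨(p : ℕ), lt_of_lt_of_le p.isLt hHn⟩, ⟨(q : ℕ), lt_of_lt_of_le q.isLt hHn⟩,
      by simpa using h1, by simpa using h2, by simpa using h3, by simpa using h4, ?_⟩
    exact (hmatch q p).mp h5
  · rintro ⟨p, q, h1, h2, h3, h4, h5⟩
    have hbH : b ≤ H := by
      apply hno a b
      rw [mem_invh]
      exact ⟨p, q, h1, h2, h3, h4, h5⟩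
    have hqH : (q : ℕ) < H := by omega
    have hpH : (p : ℕ) < H := by omega
    refine ⟨⟨(p : ℕ), hpH⟩, ⟨(q : ℕ), hqH⟩, by simpa using h1, by simpa using h2,
      by simpa using h3, by simpa using h4, ?_⟩
    apply (hmatch ⟨(q : ℕ), hqH⟩ ⟨(p : ℕ), hpH⟩).mpr
    have e1 : (⟨((⟨(q : ℕ), hqH⟩ : Fin H) : ℕ), lt_of_lt_of_le (Fin.isLt _) hHn⟩ : Fin n) = q := by
      apply Fin.ext; simp
    have e2 : (⟨((⟨(p : ℕ), hpH⟩ : Fin H) : ℕ), lt_of_lt_of_le (Fin.isLt _) hHn⟩ : Fin n) = p := by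
      apply Fin.ext; simp
    rw [e1, e2]
    exact h5

lemma cardTf {n H : ℕ} {T : Finset ℕ}
    (hgood : H ≤ n ∧ (∀ m ∈ T, m < n) ∧ T.card = n - H) :
    (T.attachFin hgood.2.1).card = n - H := by
  rw [Finset.card_attachFin]; exact hgood.2.2

lemma cardC {n H : ℕ} {T : Finset ℕ}
    (hgood : H ≤ n ∧ (∀ m ∈ T, m < n) ∧ T.card = n - H) :
    ((T.attachFin hgood.2.1)ᶜ : Finset (Fin n)).card = H := by
  rw [Finset.card_compl, Finset.card_attachFin, hgood.2.2, Fintype.card_fin]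
  have := hgood.1; omega

def buildFun (n H : ℕ) (σ : Equiv.Perm (Fin H)) (T : Finset ℕ)
    (hgood : H ≤ n ∧ (∀ m ∈ T, m < n) ∧ T.card = n - H) : Fin n → Fin n :=
  fun p =>
    if hp : (p : ℕ) < H then
      ((T.attachFin hgood.2.1)ᶜ : Finset (Fin n)).orderEmbOfFin (cardC hgood) (σ ⟨(p : ℕ), hp⟩)
    else
      (T.attachFin hgood.2.1).orderEmbOfFin (cardTf hgood)
        ⟨(p : ℕ) - H, by have := p.isLt; omega⟩

lemma buildFun_inj (n H : ℕ) (σ : Equiv.Perm (Fin H)) (T : Finset ℕ)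
    (hgood : H ≤ n ∧ (∀ m ∈ T, m < n) ∧ T.card = n - H) :
    Function.Injective (buildFun n H σ T hgood) := by
  intro p q hpq
  unfold buildFun at hpq
  by_cases hp : (p : ℕ) < H <;> by_cases hq : (q : ℕ) < H
  · rw [dif_pos hp, dif_pos hq] at hpq
    have h1 := (Finset.orderEmbOfFin ((T.attachFin hgood.2.1)ᶜ) (cardC hgood)).injective hpq
    have h2 := σ.injective h1
    have := Fin.mk.injEq (↑p) hp (↑q) hq ▸ h2
    apply Fin.ext
    simpa using congrArg Fin.val h2
  · rw [dif_pos hp, dif_neg hq] at hpq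
    exfalso
    have h1 := Finset.orderEmbOfFin_mem ((T.attachFin hgood.2.1)ᶜ) (cardC hgood) (σ ⟨(p:ℕ), hp⟩)
    have h2 := Finset.orderEmbOfFin_mem (T.attachFin hgood.2.1) (cardTf hgood)
      ⟨(q : ℕ) - H, by have := q.isLt; omega⟩
    rw [hpq] at h1
    rw [Finset.mem_compl] at h1
    exact h1 h2
  · rw [dif_neg hp, dif_pos hq] at hpq
    exfalso
    have h1 := Finset.orderEmbOfFin_mem ((T.attachFin hgood.2.1)ᶜ) (cardC hgood) (σ ⟨(q:ℕ), hq⟩)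
    have h2 := Finset.orderEmbOfFin_mem (T.attachFin hgood.2.1) (cardTf hgood)
      ⟨(p : ℕ) - H, by have := p.isLt; omega⟩
    rw [← hpq] at h1
    rw [Finset.mem_compl] at h1
    exact h1 h2
  · rw [dif_neg hp, dif_neg hq] at hpq
    have h1 := (Finset.orderEmbOfFin (T.attachFin hgood.2.1) (cardTf hgood)).injective hpq
    have h2 := congrArg Fin.val h1
    simp only [Fin.val_mk] at h2
    apply Fin.ext
    omega

noncomputable def buildPerm (n H : ℕ) (σ : Equiv.Perm (Fin H)) (T : Finset ℕ) : Equiv.Perm (Fin n) :=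
  if hgood : H ≤ n ∧ (∀ m ∈ T, m < n) ∧ T.card = n - H then
    Equiv.ofBijective (buildFun n H σ T hgood)
      (Finite.injective_iff_bijective.mp (buildFun_inj n H σ T hgood))
  else 1

lemma buildPerm_apply (n H : ℕ) (σ : Equiv.Perm (Fin H)) (T : Finset ℕ)
    (hgood : H ≤ n ∧ (∀ m ∈ T, m < n) ∧ T.card = n - H) (p : Fin n) :
    buildPerm n H σ T p = buildFun n H σ T hgood p := by
  rw [buildPerm, dif_pos hgood]
  rfl

lemma buildPerm_lt (n H : ℕ) (σ : Equiv.Perm (Fin H)) (T : Finset ℕ)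
    (hgood : H ≤ n ∧ (∀ m ∈ T, m < n) ∧ T.card = n - H) (p : Fin n) (hp : (p : ℕ) < H) :
    buildPerm n H σ T p
      = ((T.attachFin hgood.2.1)ᶜ : Finset (Fin n)).orderEmbOfFin (cardC hgood)
          (σ ⟨(p : ℕ), hp⟩) := by
  rw [buildPerm_apply n H σ T hgood, buildFun, dif_pos hp]

lemma buildPerm_ge (n H : ℕ) (σ : Equiv.Perm (Fin H)) (T : Finset ℕ)
    (hgood : H ≤ n ∧ (∀ m ∈ T, m < n) ∧ T.card = n - H) (p : Fin n) (hp : ¬ (p : ℕ) < H) :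
    buildPerm n H σ T p
      = (T.attachFin hgood.2.1).orderEmbOfFin (cardTf hgood)
          ⟨(p : ℕ) - H, by have := p.isLt; omega⟩ := by
  rw [buildPerm_apply n H σ T hgood, buildFun, dif_neg hp]

lemma mem_Bset (h : ℕ → ℕ) (S : Finset (ℕ × ℕ)) (k n : ℕ) (π : Equiv.Perm (Fin n)) :
    π ∈ Bset h S k n ↔ invh h π = S ∧ entry π (h (mS S)) = k := by
  simp [Bset, Ih, Finset.mem_filter]

lemma buildPerm_lt' (n H : ℕ) (σ : Equiv.Perm (Fin H)) (T : Finset ℕ)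
    (hgood : H ≤ n ∧ (∀ m ∈ T, m < n) ∧ T.card = n - H) (v : ℕ) (hv : v < H) (hvn : v < n) :
    buildPerm n H σ T ⟨v, hvn⟩
      = ((T.attachFin hgood.2.1)ᶜ : Finset (Fin n)).orderEmbOfFin (cardC hgood) (σ ⟨v, hv⟩) :=
  buildPerm_lt n H σ T hgood ⟨v, hvn⟩ hv

lemma buildPerm_ge' (n H : ℕ) (σ : Equiv.Perm (Fin H)) (T : Finset ℕ)
    (hgood : H ≤ n ∧ (∀ m ∈ T, m < n) ∧ T.card = n - H) (v : ℕ) (hv : ¬ v < H) (hvn : v < n) :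
    buildPerm n H σ T ⟨v, hvn⟩
      = (T.attachFin hgood.2.1).orderEmbOfFin (cardTf hgood) ⟨v - H, by omega⟩ :=
  buildPerm_ge n H σ T hgood ⟨v, hvn⟩ hv

lemma fwd (h : ℕ → ℕ) (hmono : ∀ ⦃i j : ℕ⦄, 0 < i → i ≤ j → h i ≤ h j)
    (hgt : ∀ i : ℕ, 0 < i → i < h i) (S : Finset (ℕ × ℕ)) (hSne : S.Nonempty)
    (hadm : Admissible h S) (m H n k : ℕ) (hm : mS S = m) (hHd : h (mS S) = H)
    (hn : H ≤ n) (hk2 : k ≤ H)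
    (σ : Equiv.Perm (Fin H)) (hσ : σ ∈ Bset h S k H)
    (T : Finset ℕ) (hT : T ∈ Finset.powersetCard (n - H) (Finset.Icc k (n - 1))) :
    buildPerm n H σ T ∈ Bset h S k n := by
  have hm1 : 1 ≤ m := hm ▸ mS_pos h hgt S hSne hadm
  have hmH : m < H := by rw [← hm, ← hHd]; exact hgt (mS S) (by omega)
  rw [Finset.mem_powersetCard] at hT
  have hgood : H ≤ n ∧ (∀ x ∈ T, x < n) ∧ T.card = n - H :=
    ⟨hn, fun x hx => by have := hT.1 hx; rw [Finset.mem_Icc] at this; omega, hT.2⟩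
  set π := buildPerm n H σ T with hπd
  rw [mem_Bset, hHd] at hσ ⊢
  obtain ⟨hσinv, hσent⟩ := hσ
  have hH1H : H - 1 < H := by omega
  have hent' : (σ ⟨H - 1, hH1H⟩ : ℕ) + 1 = k := by
    rw [entry, dif_pos hH1H] at hσent; exact hσent
  have hk0 : 1 ≤ k := by omega
  have hsmall : ∀ x : Fin n, (x : ℕ) < k → x ∈ ((T.attachFin hgood.2.1)ᶜ : Finset (Fin n)) := by
    intro x hx
    rw [Finset.mem_compl, Finset.mem_attachFin]
    intro hmem
    have := hT.1 hmem; rw [Finset.mem_Icc] at this; omega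
  have hembC : ∀ i : Fin H, (i : ℕ) < k →
      (((T.attachFin hgood.2.1)ᶜ.orderEmbOfFin (cardC hgood) i : Fin n) : ℕ) = (i : ℕ) :=
    fun i hi => orderEmbOfFin_small _ (cardC hgood) hsmall i hi
  have hembT : ∀ j : Fin (n - H),
      k ≤ (((T.attachFin hgood.2.1).orderEmbOfFin (cardTf hgood) j : Fin n) : ℕ) := by
    intro j
    have hmem := Finset.orderEmbOfFin_mem (T.attachFin hgood.2.1) (cardTf hgood) j
    rw [Finset.mem_attachFin] at hmem
    have := hT.1 hmem; rw [Finset.mem_Icc] at this; omega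
  have hπH1 : ∀ hpf : H - 1 < n, ((π ⟨H - 1, hpf⟩ : Fin n) : ℕ) = k - 1 := by
    intro hpf
    rw [hπd, buildPerm_lt' n H σ T hgood (H - 1) hH1H hpf, hembC _ (by omega)]
    omega
  constructor
  · -- invh h π = S
    have hmatch : ∀ p q : Fin H, σ p < σ q ↔
        π ⟨(p : ℕ), lt_of_lt_of_le p.isLt hn⟩ < π ⟨(q : ℕ), lt_of_lt_of_le q.isLt hn⟩ := by
      intro p q
      rw [hπd, buildPerm_lt' n H σ T hgood (p : ℕ) p.isLt _,
        buildPerm_lt' n H σ T hgood (q : ℕ) q.isLt _]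
      simp only [Fin.eta]
      exact (OrderEmbedding.lt_iff_lt _).symm
    have hno : ∀ a b : ℕ, (a, b) ∈ invh h π → b ≤ H := by
      intro a b hab
      rw [mem_invh] at hab
      obtain ⟨p, q, h1, h2, h3, h4, h5⟩ := hab
      by_contra hcon
      have hqH : ¬ (q : ℕ) < H := by omega
      have hq : k ≤ ((π q : Fin n) : ℕ) := by
        have heq : π q = π ⟨(q : ℕ), q.isLt⟩ := by simp only [Fin.eta]
        rw [heq, hπd, buildPerm_ge' n H σ T hgood (q : ℕ) hqH q.isLt]
        exact hembT _
      have h5' := Fin.lt_def.mp h5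
      rcases lt_or_ge (p : ℕ) H with hpH | hpH
      · rcases le_or_gt ((p : ℕ) + 1) m with hpm | hpm
        · have hph : h ((p : ℕ) + 1) ≤ H :=
            le_trans (hmono (by omega) (show (p : ℕ) + 1 ≤ mS S by omega)) (le_of_eq hHd)
          omega
        · have hσc := chainS h hgt hσinv ⟨(p : ℕ), hpH⟩ ⟨H - 1, hH1H⟩
            (by simp only [Fin.val_mk]; omega) (by simp only [Fin.val_mk]; omega)
          simp only [Fin.val_mk] at hσc
          have hπp : ((π p : Fin n) : ℕ) = ((σ ⟨(p : ℕ), hpH⟩ : Fin H) : ℕ) := by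
            have heq : π p = π ⟨(p : ℕ), p.isLt⟩ := by simp only [Fin.eta]
            rw [heq, hπd, buildPerm_lt' n H σ T hgood (p : ℕ) hpH p.isLt,
              hembC _ (by omega)]
          omega
      · have : π p < π q := by
          have heqp : π p = π ⟨(p : ℕ), p.isLt⟩ := by simp only [Fin.eta]
          have heqq : π q = π ⟨(q : ℕ), q.isLt⟩ := by simp only [Fin.eta]
          rw [heqp, heqq, hπd, buildPerm_ge' n H σ T hgood (p : ℕ) (by omega) p.isLt,
            buildPerm_ge' n H σ T hgood (q : ℕ) hqH q.isLt]
          apply (OrderEmbedding.lt_iff_lt _).mpr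
          rw [Fin.lt_def]
          simp only [Fin.val_mk]
          omega
        exact absurd h5 (not_lt.mpr this.le)
    rw [← invh_restrict h hn π σ hmatch hno]
    exact hσinv
  · -- entry π H = k
    have hpf : H - 1 < n := by omega
    rw [entry, dif_pos hpf, hπH1 hpf]
    omega

lemma build_mem_iff (n H : ℕ) (σ : Equiv.Perm (Fin H)) (T : Finset ℕ)
    (hgood : H ≤ n ∧ (∀ m ∈ T, m < n) ∧ T.card = n - H) (x : Fin n) :
    (x : ℕ) ∈ T ↔ ∃ p : Fin n, ¬ (p : ℕ) < H ∧ buildPerm n H σ T p = x := by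
  constructor
  · intro hx
    have hxf : x ∈ T.attachFin hgood.2.1 := by rw [Finset.mem_attachFin]; exact hx
    have hxr : x ∈ Set.range ((T.attachFin hgood.2.1).orderEmbOfFin (cardTf hgood)) := by
      rw [Finset.range_orderEmbOfFin]
      exact hxf
    obtain ⟨j, hj⟩ := hxr
    refine ⟨⟨H + (j : ℕ), by have := j.isLt; omega⟩, by simp only [Fin.val_mk]; omega, ?_⟩
    rw [buildPerm_ge' n H σ T hgood (H + (j : ℕ)) (by omega) (by have := j.isLt; omega)]
    have he : (⟨H + (j : ℕ) - H, by have := j.isLt; omega⟩ : Fin (n - H)) = j := by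
      apply Fin.ext; simp only [Fin.val_mk]; omega
    rw [he, hj]
  · rintro ⟨p, hp, rfl⟩
    rw [buildPerm_ge n H σ T hgood p hp]
    have hmem := Finset.orderEmbOfFin_mem (T.attachFin hgood.2.1) (cardTf hgood)
      ⟨(p : ℕ) - H, by have := p.isLt; omega⟩
    rw [Finset.mem_attachFin] at hmem
    exact hmem

lemma build_inj (n H : ℕ) (σ σ' : Equiv.Perm (Fin H)) (T T' : Finset ℕ)
    (hgood : H ≤ n ∧ (∀ m ∈ T, m < n) ∧ T.card = n - H)
    (hgood' : H ≤ n ∧ (∀ m ∈ T', m < n) ∧ T'.card = n - H)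
    (heq : buildPerm n H σ T = buildPerm n H σ' T') : σ = σ' ∧ T = T' := by
  have hTT : T = T' := by
    apply Finset.ext
    intro a
    constructor
    · intro ha
      have han : a < n := hgood.2.1 a ha
      obtain ⟨p, hp, hpe⟩ := (build_mem_iff n H σ T hgood ⟨a, han⟩).mp ha
      rw [heq] at hpe
      exact (build_mem_iff n H σ' T' hgood' ⟨a, han⟩).mpr ⟨p, hp, hpe⟩
    · intro ha
      have han : a < n := hgood'.2.1 a ha
      obtain ⟨p, hp, hpe⟩ := (build_mem_iff n H σ' T' hgood' ⟨a, han⟩).mp ha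
      rw [← heq] at hpe
      exact (build_mem_iff n H σ T hgood ⟨a, han⟩).mpr ⟨p, hp, hpe⟩
  subst hTT
  refine ⟨?_, rfl⟩
  apply Equiv.ext
  intro p
  have hlt : (p : ℕ) < n := lt_of_lt_of_le p.isLt hgood.1
  have h1 : buildPerm n H σ T ⟨(p : ℕ), hlt⟩ = buildPerm n H σ' T ⟨(p : ℕ), hlt⟩ := by rw [heq]
  rw [buildPerm_lt' n H σ T hgood (p : ℕ) p.isLt hlt,
    buildPerm_lt' n H σ' T hgood (p : ℕ) p.isLt hlt] at h1
  have h2 := (Finset.orderEmbOfFin _ (cardC hgood)).injective h1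
  simpa only [Fin.eta] using h2

set_option maxHeartbeats 1000000 in
lemma build_surj (h : ℕ → ℕ) (hmono : ∀ ⦃i j : ℕ⦄, 0 < i → i ≤ j → h i ≤ h j)
    (hgt : ∀ i : ℕ, 0 < i → i < h i) (S : Finset (ℕ × ℕ)) (hSne : S.Nonempty)
    (hadm : Admissible h S) (m H n k : ℕ) (hm : mS S = m) (hHd : h (mS S) = H)
    (hn : H ≤ n) (hk2 : k ≤ H) (π : Equiv.Perm (Fin n)) (hπ : π ∈ Bset h S k n) :
    ∃ σ : Equiv.Perm (Fin H), ∃ T : Finset ℕ, σ ∈ Bset h S k H ∧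
      T ∈ Finset.powersetCard (n - H) (Finset.Icc k (n - 1)) ∧ buildPerm n H σ T = π := by
  have hm1 : 1 ≤ m := hm ▸ mS_pos h hgt S hSne hadm
  have hmH : m < H := by rw [← hm, ← hHd]; exact hgt (mS S) (by omega)
  rw [mem_Bset, hHd] at hπ
  obtain ⟨hinv, hent⟩ := hπ
  have hH1n : H - 1 < n := by omega
  have hent' : ((π ⟨H - 1, hH1n⟩ : Fin n) : ℕ) + 1 = k := by
    rw [entry, dif_pos hH1n] at hent; exact hent
  have hk0 : 1 ≤ k := by omega
  have hchain : ∀ p q : Fin n, m ≤ (p : ℕ) → (p : ℕ) ≤ (q : ℕ) →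
      (π p : ℕ) + ((q : ℕ) - (p : ℕ)) ≤ (π q : ℕ) := by
    intro p q hp hpq; exact chainS h hgt hinv p q (by omega) hpq
  have htj : ∀ j : Fin (n - H), H + (j : ℕ) < n := fun j => by have := j.isLt; omega
  set tmap : Fin (n - H) → Fin n := fun j => π ⟨H + (j : ℕ), htj j⟩ with htmap
  have htmono : StrictMono tmap := by
    intro j j' hjj
    rw [Fin.lt_def]
    have hjj' := Fin.lt_def.mp hjj
    have := hchain ⟨H + (j : ℕ), htj j⟩ ⟨H + (j' : ℕ), htj j'⟩
      (by simp only [Fin.val_mk]; omega) (by simp only [Fin.val_mk]; omega)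
    simp only [Fin.val_mk] at this
    show ((π ⟨H + (j : ℕ), htj j⟩ : Fin n) : ℕ) < ((π ⟨H + (j' : ℕ), htj j'⟩ : Fin n) : ℕ)
    omega
  set T : Finset ℕ := Finset.image (fun j => ((tmap j : Fin n) : ℕ)) Finset.univ with hTdef
  have hTmem : ∀ a : ℕ, a ∈ T ↔ ∃ j : Fin (n - H), ((tmap j : Fin n) : ℕ) = a := by
    intro a; rw [hTdef]; simp
  have htail_big : ∀ j : Fin (n - H), k ≤ ((tmap j : Fin n) : ℕ) := by
    intro j
    have := hchain ⟨H - 1, hH1n⟩ ⟨H + (j : ℕ), htj j⟩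
      (by simp only [Fin.val_mk]; omega) (by simp only [Fin.val_mk]; omega)
    simp only [Fin.val_mk] at this
    have he : tmap j = π ⟨H + (j : ℕ), htj j⟩ := rfl
    rw [he]
    omega
  have hTsub : T ⊆ Finset.Icc k (n - 1) := by
    intro a ha
    rw [hTmem] at ha; obtain ⟨j, rfl⟩ := ha
    rw [Finset.mem_Icc]
    exact ⟨htail_big j, by have := (tmap j).isLt; omega⟩
  have hTcard : T.card = n - H := by
    rw [hTdef, Finset.card_image_of_injective _
        (show Function.Injective (fun j => ((tmap j : Fin n) : ℕ)) from
          fun a b hab => htmono.injective (Fin.val_injective hab)),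
      Finset.card_univ, Fintype.card_fin]
  have hgood : H ≤ n ∧ (∀ x ∈ T, x < n) ∧ T.card = n - H :=
    ⟨hn, fun x hx => by rw [hTmem] at hx; obtain ⟨j, rfl⟩ := hx; exact (tmap j).isLt, hTcard⟩
  have hTf_iff : ∀ x : Fin n, x ∈ T.attachFin hgood.2.1 ↔ ∃ j, tmap j = x := by
    intro x
    rw [Finset.mem_attachFin, hTmem]
    constructor
    · rintro ⟨j, hj⟩; exact ⟨j, Fin.ext hj⟩
    · rintro ⟨j, rfl⟩; exact ⟨j, rfl⟩
  have hmemC : ∀ p : Fin n, (p : ℕ) < H → π p ∈ ((T.attachFin hgood.2.1)ᶜ : Finset (Fin n)) := by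
    intro p hp
    rw [Finset.mem_compl, hTf_iff]
    rintro ⟨j, hj⟩
    have he : tmap j = π ⟨H + (j : ℕ), htj j⟩ := rfl
    rw [he] at hj
    have h2 := π.injective hj
    have h3 := congrArg Fin.val h2
    simp only [Fin.val_mk] at h3
    omega
  set C := ((T.attachFin hgood.2.1)ᶜ : Finset (Fin n)) with hCdef
  set g : Fin H → Fin H := fun p =>
    (C.orderIsoOfFin (cardC hgood)).symm
      ⟨π ⟨(p : ℕ), lt_of_lt_of_le p.isLt hn⟩, hmemC _ p.isLt⟩ with hgdef
  have hginj : Function.Injective g := by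
    intro p q hpq
    have h1 := (C.orderIsoOfFin (cardC hgood)).symm.injective hpq
    have h2 : π ⟨(p : ℕ), lt_of_lt_of_le p.isLt hn⟩ = π ⟨(q : ℕ), lt_of_lt_of_le q.isLt hn⟩ :=
      congrArg Subtype.val h1
    have h3 := π.injective h2
    have h4 := congrArg Fin.val h3
    simp only [Fin.val_mk] at h4
    exact Fin.ext h4
  set σ : Equiv.Perm (Fin H) :=
    Equiv.ofBijective g (Finite.injective_iff_bijective.mp hginj) with hσdef
  have hσapp : ∀ p : Fin H, σ p = g p := fun p => rfl
  have hembCg : ∀ p : Fin H,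
      (C.orderEmbOfFin (cardC hgood)) (g p) = π ⟨(p : ℕ), lt_of_lt_of_le p.isLt hn⟩ := by
    intro p
    rw [hgdef]
    rw [← Finset.coe_orderIsoOfFin_apply, OrderIso.apply_symm_apply]
  have hsmall : ∀ x : Fin n, (x : ℕ) < k → x ∈ C := by
    intro x hx
    rw [hCdef, Finset.mem_compl, hTf_iff]
    rintro ⟨j, rfl⟩
    have := htail_big j
    omega
  have hbuild : buildPerm n H σ T = π := by
    apply Equiv.ext
    intro p
    rcases lt_or_ge (p : ℕ) H with hp | hp
    · rw [buildPerm_lt n H σ T hgood p hp, hσapp, hembCg]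
    · rw [buildPerm_ge n H σ T hgood p (not_lt.mpr hp)]
      have huniq : tmap = (T.attachFin hgood.2.1).orderEmbOfFin (cardTf hgood) :=
        Finset.orderEmbOfFin_unique (cardTf hgood)
          (fun j => (hTf_iff (tmap j)).mpr ⟨j, rfl⟩) htmono
      rw [← congrFun huniq ⟨(p : ℕ) - H, by have := p.isLt; omega⟩]
      show π ⟨H + ((p : ℕ) - H), _⟩ = π p
      apply congrArg
      apply Fin.ext
      simp only [Fin.val_mk]
      omega
  have hH1H : H - 1 < H := by omega
  have hentσ : entry σ H = k := by
    rw [entry, dif_pos hH1H, hσapp]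
    have h1 := hembCg ⟨H - 1, hH1H⟩
    have hidx : (⟨((⟨H - 1, hH1H⟩ : Fin H) : ℕ), lt_of_lt_of_le (Fin.isLt _) hn⟩ : Fin n)
        = ⟨H - 1, hH1n⟩ := by
      apply Fin.ext; simp only [Fin.val_mk]
    rw [hidx] at h1
    have h2 : ((C.orderEmbOfFin (cardC hgood)) ⟨k - 1, by omega⟩ : ℕ) = k - 1 :=
      orderEmbOfFin_small C (cardC hgood) hsmall ⟨k - 1, by omega⟩
        (by simp only [Fin.val_mk]; omega)
    have h1v : (((C.orderEmbOfFin (cardC hgood)) (g ⟨H - 1, hH1H⟩) : Fin n) : ℕ) = k - 1 := by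
      rw [h1]
      omega
    have h3 : (C.orderEmbOfFin (cardC hgood)) (g ⟨H - 1, hH1H⟩)
        = (C.orderEmbOfFin (cardC hgood)) ⟨k - 1, by omega⟩ := by
      apply Fin.ext
      omega
    have h4 := (C.orderEmbOfFin (cardC hgood)).injective h3
    rw [h4]
    simp only [Fin.val_mk]
    omega
  have hinvσ : invh h σ = S := by
    have hmatch : ∀ p q : Fin H, σ p < σ q ↔
        π ⟨(p : ℕ), lt_of_lt_of_le p.isLt hn⟩ < π ⟨(q : ℕ), lt_of_lt_of_le q.isLt hn⟩ := by
      intro p q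
      rw [hσapp, hσapp, hgdef]
      rw [OrderIso.lt_iff_lt]
      exact Subtype.mk_lt_mk
    have hno : ∀ a b : ℕ, (a, b) ∈ invh h π → b ≤ H := by
      intro a b hab
      rw [hinv] at hab
      have := pair_bound h hmono hgt S hadm a b hab
      omega
    rw [invh_restrict h hn π σ hmatch hno]
    exact hinv
  refine ⟨σ, T, ?_, ?_, hbuild⟩
  · rw [mem_Bset, hHd]
    exact ⟨hinvσ, hentσ⟩
  · rw [Finset.mem_powersetCard]
    exact ⟨hTsub, hTcard⟩

/-- For `n ≥ h(m)`: `B_k(S,n)` is nonempty only if `h(m)−m ≤ k ≤ h(m)`, and for each such `k`,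
`#B_k(S,n) = #B_k(S,h(m)) · C(n−k, n−h(m))`. -/
theorem stmt6 (h : ℕ → ℕ) (hmono : ∀ ⦃i j : ℕ⦄, 0 < i → i ≤ j → h i ≤ h j)
    (hgt : ∀ i : ℕ, 0 < i → i < h i) (S : Finset (ℕ × ℕ)) (hSne : S.Nonempty)
    (hadm : Admissible h S) (n : ℕ) (hn : h (mS S) ≤ n) :
    (∀ k : ℕ, (Bset h S k n).Nonempty → h (mS S) - mS S ≤ k ∧ k ≤ h (mS S)) ∧
    (∀ k : ℕ, h (mS S) - mS S ≤ k → k ≤ h (mS S) →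
      (Bset h S k n).card = (Bset h S k (h (mS S))).card * Nat.choose (n - k) (n - h (mS S))) := by
  have hm1 : 1 ≤ mS S := mS_pos h hgt S hSne hadm
  have hmH : mS S < h (mS S) := hgt (mS S) (by omega)
  set m := mS S with hm
  set H := h (mS S) with hH
  have part1 : ∀ k : ℕ, (Bset h S k n).Nonempty → H - m ≤ k ∧ k ≤ H := by
    rintro k ⟨π, hπ⟩
    rw [mem_Bset] at hπ
    obtain ⟨hinv, hent⟩ := hπ
    have hH1n : H - 1 < n := by omega
    rw [entry, dif_pos hH1n] at hent
    have hub := chainS h hgt hinv ⟨H - 1, hH1n⟩ ⟨n - 1, by omega⟩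
      (by simp only [Fin.val_mk]; omega) (by simp only [Fin.val_mk]; omega)
    have hlb := chainS h hgt hinv ⟨m, by omega⟩ ⟨H - 1, hH1n⟩
      (by simp only [Fin.val_mk]; omega) (by simp only [Fin.val_mk]; omega)
    simp only [Fin.val_mk] at hub hlb
    have h1 : ((π ⟨n - 1, by omega⟩ : Fin n) : ℕ) < n := Fin.isLt _
    have hd : (π ⟨H - 1, hH1n⟩ : ℕ) + 1 = k := hent
    constructor <;> omega
  refine ⟨part1, ?_⟩
  intro k hk1 hk2
  have hk0 : 1 ≤ k := by omega
  have hg : ∀ T : Finset ℕ, T ∈ Finset.powersetCard (n - H) (Finset.Icc k (n - 1)) →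
      H ≤ n ∧ (∀ x ∈ T, x < n) ∧ T.card = n - H := by
    intro T hT
    rw [Finset.mem_powersetCard] at hT
    refine ⟨hn, fun x hx => ?_, hT.2⟩
    have := hT.1 hx
    rw [Finset.mem_Icc] at this
    omega
  have hcard : ((Bset h S k H) ×ˢ (Finset.powersetCard (n - H) (Finset.Icc k (n - 1)))).card
      = (Bset h S k n).card := by
    apply Finset.card_bij (fun pr _ => buildPerm n H pr.1 pr.2)
    · intro pr hpr
      rw [Finset.mem_product] at hpr
      exact fwd h hmono hgt S hSne hadm m H n k hm.symm hH.symm hn hk2 pr.1 hpr.1 pr.2 hpr.2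
    · intro pr1 hpr1 pr2 hpr2 heq
      rw [Finset.mem_product] at hpr1 hpr2
      have := build_inj n H pr1.1 pr2.1 pr1.2 pr2.2 (hg pr1.2 hpr1.2) (hg pr2.2 hpr2.2) heq
      exact Prod.ext this.1 this.2
    · intro π hπB
      obtain ⟨σ, T, h1, h2, h3⟩ :=
        build_surj h hmono hgt S hSne hadm m H n k hm.symm hH.symm hn hk2 π hπB
      exact ⟨(σ, T), Finset.mem_product.mpr ⟨h1, h2⟩, h3⟩
  rw [← hcard, Finset.card_product, Finset.card_powersetCard, Nat.card_Icc]
  have he : n - 1 + 1 - k = n - k := by omega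
  rw [he]
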